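/- arXiv:0908.2475 — 2 statements merged into one kernel-verified Lean document; each statement's English description precedes it below -/
import Mathlib

section
/- Let A be an effect on a complex Hilbert space H and B ∈ B(H). If B does not commute with A, then there exist positive integers m and integers k, j with |k - j| ≥ 2 such that P^A((k/m, (k+1)/m]) · B · P^A((j/m, (j+1)/m]) ≠ 0. -/
/-- A projection-valued (spectral) measure for the operator `A`. -/
structure IsSpectralMeasure {H : Type*} [NormedAddCommGroup H] [InnerProductSpace ℂ H]
    [CompleteSpace H] (A : H →L[ℂ] H) (P : Set ℝ → H →L[ℂ] H) : Prop where
  isIdem : ∀ s, IsIdempotentElem (P s)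
  selfAdj : ∀ s, IsSelfAdjoint (P s)
  empty : P ∅ = 0
  univ : P Set.univ = 1
  inter : ∀ s t, P (s ∩ t) = P s * P t
  hasSum : ∀ (s : ℕ → Set ℝ), Pairwise (Function.onFun Disjoint s) →
    ∀ x, HasSum (fun n => P (s n) x) (P (⋃ n, s n) x)
  commutes : ∀ s, A * P s = P s * A
  smul_le : ∀ a b : ℝ, (a : ℂ) • P (Set.Ioc a b) ≤ P (Set.Ioc a b) * A * P (Set.Ioc a b)
  le_smul : ∀ a b : ℝ, P (Set.Ioc a b) * A * P (Set.Ioc a b) ≤ (b : ℂ) • P (Set.Ioc a b)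

/-!
Cut the spectrum into the cells `(k/m, (k+1)/m]` and let `p k` be their spectral projections:
they are pairwise orthogonal, only `k ∈ [-1, m]` contribute because `0 ≤ A ≤ 1`, and these
sum to `1`. On the range of `p k` the operator `A` is `k/m` up to an error of norm `≤ 1/m`,
so `‖p k * [B, A] * p j‖ ≤ 3‖B‖/m` whenever `|k - j| ≤ 1`. If all compressions
`p k * B * p j` with `|k - j| ≥ 2` vanish, so do those of `[B, A]`, which therefore splits
into three block diagonals; by orthogonality of the blocks each has norm `≤ 3‖B‖/m`. Hence
`‖[B, A]‖ ≤ 9‖B‖/m` for every `m`, so `B` commutes with `A`.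
-/

open scoped InnerProductSpace
open Finset Function

section Pythagoras

variable {𝕜 E ι : Type*} [RCLike 𝕜] [NormedAddCommGroup E] [InnerProductSpace 𝕜 E]

theorem norm_sum_sq_eq_sum_norm_sq_of_pairwise_inner_eq_zero (s : Finset ι) (v : ι → E)
    (hv : (s : Set ι).Pairwise fun i j => ⟪v i, v j⟫_𝕜 = 0) :
    ‖∑ i ∈ s, v i‖ ^ 2 = ∑ i ∈ s, ‖v i‖ ^ 2 := by
  classical
  induction s using Finset.induction_on with
  | empty => simp
  | insert a s ha ih =>
    rw [coe_insert] at hv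
    rw [sum_insert ha, sum_insert ha, ← ih (hv.mono (Set.subset_insert a _)), sq, sq, sq,
      norm_add_sq_eq_norm_sq_add_norm_sq_of_inner_eq_zero (𝕜 := 𝕜)]
    rw [inner_sum]
    exact sum_eq_zero fun i hi =>
      hv (Set.mem_insert a _) (Set.mem_insert_of_mem a hi) (ne_of_mem_of_not_mem hi ha).symm

theorem norm_sum_le_of_pairwise_inner_eq_zero (s : Finset ι) (u v : ι → E) {C : ℝ}
    (hC : 0 ≤ C) (hu : (s : Set ι).Pairwise fun i j => ⟪u i, u j⟫_𝕜 = 0)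
    (hv : (s : Set ι).Pairwise fun i j => ⟪v i, v j⟫_𝕜 = 0)
    (huv : ∀ i ∈ s, ‖u i‖ ≤ C * ‖v i‖) :
    ‖∑ i ∈ s, u i‖ ≤ C * ‖∑ i ∈ s, v i‖ := by
  refine (pow_le_pow_iff_left₀ (norm_nonneg _) (by positivity) two_ne_zero).mp ?_
  rw [mul_pow, norm_sum_sq_eq_sum_norm_sq_of_pairwise_inner_eq_zero s u hu,
    norm_sum_sq_eq_sum_norm_sq_of_pairwise_inner_eq_zero s v hv, mul_sum]
  exact sum_le_sum fun i hi => by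
    rw [← mul_pow]
    exact pow_le_pow_left₀ (norm_nonneg _) (huv i hi) 2

end Pythagoras

theorem sum_eq_sum_add_Icc_of_far_eq_zero {M : Type*} [AddCommMonoid M] (f : ℤ → M)
    (I : Finset ℤ) (hI : ∀ k ∉ I, f k = 0) (j : ℤ)
    (hfar : ∀ k, 2 ≤ |k - j| → f k = 0) :
    ∑ k ∈ I, f k = ∑ d ∈ Icc (-1 : ℤ) 1, f (j + d) := by
  have hnear : ∀ d ∉ Icc (-1 : ℤ) 1, f (j + d) = 0 := fun d hd =>
    hfar _ (by rw [mem_Icc] at hd; rw [add_sub_cancel_left, le_abs]; omega)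
  rw [← finsum_eq_sum_of_support_subset f (fun k hk => by_contra fun h => hk (hI k h)),
    ← finsum_comp_equiv (Equiv.addLeft j)]
  exact finsum_eq_sum_of_support_subset _ fun d hd => by_contra fun h => hd (hnear d h)

theorem eq_sum_near_diagonals_of_far_eq_zero {R : Type*} [Semiring R] (p : ℤ → R)
    (I : Finset ℤ) (hp : ∑ k ∈ I, p k = 1) (hI : ∀ k ∉ I, p k = 0) (T : R)
    (hT : ∀ k j, 2 ≤ |k - j| → p k * T * p j = 0) :
    T = ∑ d ∈ Icc (-1 : ℤ) 1, ∑ j ∈ I, p (j + d) * T * p j := by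
  calc T = (∑ k ∈ I, p k) * T * ∑ j ∈ I, p j := by rw [hp, one_mul, mul_one]
    _ = ∑ j ∈ I, ∑ k ∈ I, p k * T * p j := by simp only [sum_mul, mul_sum]
    _ = ∑ j ∈ I, ∑ d ∈ Icc (-1 : ℤ) 1, p (j + d) * T * p j :=
        sum_congr rfl fun j _ => sum_eq_sum_add_Icc_of_far_eq_zero _ I
          (fun k hk => by rw [hI k hk, zero_mul, zero_mul]) j (fun k hk => hT k j hk)
    _ = _ := sum_comm

theorem eq_zero_of_forall_norm_le_div {E : Type*} [NormedAddCommGroup E] (x : E) (C : ℝ)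
    (h : ∀ m : ℕ, 0 < m → ‖x‖ ≤ C / m) : x = 0 := by
  refine norm_le_zero_iff.mp (ge_of_tendsto (tendsto_const_div_atTop_nhds_zero_nat C) ?_)
  filter_upwards [Filter.eventually_gt_atTop 0] with m hm using h m hm

def gridIoc (m : ℕ) (k : ℤ) : Set ℝ := Set.Ioc ((k : ℝ) / m) (((k : ℝ) + 1) / m)

theorem gridIoc_eq_Ioc_zsmul (m : ℕ) (k : ℤ) :
    gridIoc m k = Set.Ioc (k • (m : ℝ)⁻¹) ((k + 1) • (m : ℝ)⁻¹) := by
  simp only [gridIoc, zsmul_eq_mul, Int.cast_add, Int.cast_one, div_eq_mul_inv]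

theorem pairwise_disjoint_gridIoc (m : ℕ) : Pairwise (Disjoint on gridIoc m) := by
  rw [funext (gridIoc_eq_Ioc_zsmul m)]
  simpa only [zero_add] using Set.pairwise_disjoint_Ioc_add_zsmul (0 : ℝ) (m : ℝ)⁻¹

theorem iUnion_gridIoc {m : ℕ} (hm : 0 < m) : ⋃ k, gridIoc m k = Set.univ := by
  simpa only [gridIoc_eq_Ioc_zsmul] using iUnion_Ioc_zsmul (p := (m : ℝ)⁻¹) (by positivity)

namespace IsSpectralMeasure

variable {H : Type*} [NormedAddCommGroup H] [InnerProductSpace ℂ H] [CompleteSpace H]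
  {A : H →L[ℂ] H} {P : Set ℝ → H →L[ℂ] H}

theorem isStarProjection (hP : IsSpectralMeasure A P) (s : Set ℝ) : IsStarProjection (P s) :=
  ⟨hP.isIdem s, hP.selfAdj s⟩

theorem mul_eq_zero_of_disjoint (hP : IsSpectralMeasure A P) {s t : Set ℝ} (h : Disjoint s t) :
    P s * P t = 0 := by
  rw [← hP.inter, h.inter_eq, hP.empty]

theorem inner_eq_zero_of_disjoint (hP : IsSpectralMeasure A P) {s t : Set ℝ} (h : Disjoint s t)
    (x y : H) : ⟪P s x, P t y⟫_ℂ = 0 := by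
  calc ⟪P s x, P t y⟫_ℂ = ⟪x, (P s * P t) y⟫_ℂ := (hP.selfAdj s).isSymmetric x (P t y)
    _ = 0 := by
      rw [hP.mul_eq_zero_of_disjoint h, zero_apply, inner_zero_right]

theorem hasSum_of_denumerable (hP : IsSpectralMeasure A P) {ι : Type*} [Denumerable ι]
    (s : ι → Set ℝ) (hs : Pairwise (Disjoint on s)) (x : H) :
    HasSum (fun i => P (s i) x) (P (⋃ i, s i) x) := by
  let e : ℕ ≃ ι := (Denumerable.eqv ι).symm
  have h := hP.hasSum (s ∘ e) (hs.comp_of_injective e.injective) x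
  rw [comp_def, e.surjective.iUnion_comp] at h
  exact e.hasSum_iff.mp h

theorem smul_le_compression (hP : IsSpectralMeasure A P) (a b : ℝ) :
    a • P (Set.Ioc a b) ≤ P (Set.Ioc a b) * A * P (Set.Ioc a b) := by
  simpa only [Complex.coe_smul] using hP.smul_le a b

theorem compression_le_smul (hP : IsSpectralMeasure A P) (a b : ℝ) :
    P (Set.Ioc a b) * A * P (Set.Ioc a b) ≤ b • P (Set.Ioc a b) := by
  simpa only [Complex.coe_smul] using hP.le_smul a b

theorem Ioc_eq_zero_of_lt_zero (hP : IsSpectralMeasure A P) (hA : 0 ≤ A) {a b : ℝ}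
    (hb : b < 0) : P (Set.Ioc a b) = 0 := by
  have hnonneg : 0 ≤ b • P (Set.Ioc a b) :=
    ((hP.selfAdj _).conjugate_nonneg hA).trans (hP.compression_le_smul a b)
  have hzero : b • P (Set.Ioc a b) = 0 :=
    le_antisymm (smul_nonpos_of_nonpos_of_nonneg hb.le (hP.isStarProjection _).nonneg) hnonneg
  exact (smul_eq_zero.mp hzero).resolve_left hb.ne

theorem Ioc_eq_zero_of_one_lt (hP : IsSpectralMeasure A P) (hA : A ≤ 1) {a b : ℝ} (ha : 1 < a) :
    P (Set.Ioc a b) = 0 := by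
  set p := P (Set.Ioc a b)
  have hle : a • p ≤ p := by
    simpa only [mul_one, (hP.isIdem _).eq] using
      (hP.smul_le_compression a b).trans ((hP.selfAdj _).conjugate_le_conjugate hA)
  have hzero : (a - 1) • p = 0 :=
    le_antisymm (by rwa [sub_smul, one_smul, sub_nonpos])
      (smul_nonneg (sub_nonneg.mpr ha.le) (hP.isStarProjection _).nonneg)
  exact (smul_eq_zero.mp hzero).resolve_left (sub_ne_zero.mpr ha.ne')

theorem norm_mul_sub_smul_le (hP : IsSpectralMeasure A P) {a b : ℝ} (hab : a ≤ b) :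
    ‖A * P (Set.Ioc a b) - (a : ℂ) • P (Set.Ioc a b)‖ ≤ b - a := by
  set p := P (Set.Ioc a b)
  have hAp : A * p = p * A * p := by rw [← hP.commutes, mul_assoc, (hP.isIdem _).eq]
  rw [hAp, Complex.coe_smul]
  have hnonneg : 0 ≤ p * A * p - a • p := sub_nonneg.mpr (hP.smul_le_compression a b)
  refine (CStarAlgebra.norm_le_iff_le_algebraMap _ (sub_nonneg.mpr hab) hnonneg).mpr ?_
  calc p * A * p - a • p ≤ b • p - a • p := sub_le_sub_right (hP.compression_le_smul a b) _
    _ = (b - a) • p := (sub_smul _ _ _).symm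
    _ ≤ (b - a) • 1 :=
        smul_le_smul_of_nonneg_left (hP.isStarProjection _).le_one (sub_nonneg.mpr hab)
    _ = algebraMap ℝ _ (b - a) := (Algebra.algebraMap_eq_smul_one _).symm

theorem compression_commutator_eq_zero (hP : IsSpectralMeasure A P) {s t : Set ℝ}
    {B : H →L[ℂ] H} (hB : P s * B * P t = 0) : P s * (B * A - A * B) * P t = 0 := by
  rw [mul_sub, sub_mul, ← mul_assoc, mul_assoc _ A, hP.commutes, ← mul_assoc, hB, zero_mul,
    ← mul_assoc, ← hP.commutes, mul_assoc A, mul_assoc A, hB, mul_zero, sub_zero]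

theorem norm_compression_commutator_le (hP : IsSpectralMeasure A P) (B : H →L[ℂ] H)
    {a b c d : ℝ} (hab : a ≤ b) (hcd : c ≤ d) :
    ‖P (Set.Ioc a b) * (B * A - A * B) * P (Set.Ioc c d)‖ ≤
      ‖B‖ * (b - a + (d - c) + |c - a|) := by
  set p := P (Set.Ioc a b)
  set q := P (Set.Ioc c d)
  set R := A * p - (a : ℂ) • p with hR
  set S := A * q - (c : ℂ) • q with hS
  -- `A` acts on the range of `p` (resp. `q`) as `a` (resp. `c`) up to the errors `R` and `S`
  have key :
      p * (B * A - A * B) * q = p * B * S - R * B * q + ((c - a : ℝ) : ℂ) • (p * B * q) := by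
    rw [hR, hS, hP.commutes (Set.Ioc a b)]
    simp only [mul_sub, sub_mul, mul_smul_comm, smul_mul_assoc, mul_assoc, Complex.ofReal_sub,
      sub_smul]
    abel
  have hp : ‖p‖ ≤ 1 := IsStarProjection.norm_le p (hP.isStarProjection _)
  have hq : ‖q‖ ≤ 1 := IsStarProjection.norm_le q (hP.isStarProjection _)
  have hRn : ‖R‖ ≤ b - a := hP.norm_mul_sub_smul_le hab
  have hSn : ‖S‖ ≤ d - c := hP.norm_mul_sub_smul_le hcd
  have h1 : ‖p * B * S‖ ≤ 1 * ‖B‖ * (d - c) := norm_mul₃_le.trans (by gcongr)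
  have h2 : ‖R * B * q‖ ≤ (b - a) * ‖B‖ * 1 := norm_mul₃_le.trans (by gcongr)
  have h3 : ‖((c - a : ℝ) : ℂ) • (p * B * q)‖ ≤ |c - a| * (1 * ‖B‖ * 1) := by
    rw [norm_smul, Complex.norm_real, Real.norm_eq_abs]
    exact mul_le_mul_of_nonneg_left (norm_mul₃_le.trans (by gcongr)) (abs_nonneg _)
  rw [key]
  calc _ ≤ ‖p * B * S‖ + ‖R * B * q‖ + ‖((c - a : ℝ) : ℂ) • (p * B * q)‖ :=
        (norm_add_le _ _).trans (add_le_add_left (norm_sub_le _ _) _)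
    _ ≤ _ := by linarith

theorem norm_sum_compression_shift_apply_le (hP : IsSpectralMeasure A P) {ι : Type*}
    {S : ι → Set ℝ} (hS : Pairwise (Disjoint on S)) {σ : ι → ι} (hσ : Injective σ)
    (T : H →L[ℂ] H) {C : ℝ} (hC : 0 ≤ C) (s : Finset ι)
    (hT : ∀ i ∈ s, ‖P (S (σ i)) * T * P (S i)‖ ≤ C) (x : H) :
    ‖∑ i ∈ s, (P (S (σ i)) * T * P (S i)) x‖ ≤ C * ‖∑ i ∈ s, P (S i) x‖ := by
  refine norm_sum_le_of_pairwise_inner_eq_zero (𝕜 := ℂ) s _ _ hC ?_ ?_ fun i hi => ?_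
  · intro i _ j _ hij
    simp only [mul_apply_eq_comp]
    exact hP.inner_eq_zero_of_disjoint (hS (hσ.ne hij)) _ _
  · exact fun i _ j _ hij => hP.inner_eq_zero_of_disjoint (hS hij) _ _
  · calc ‖(P (S (σ i)) * T * P (S i)) x‖
          = ‖(P (S (σ i)) * T * P (S i)) (P (S i) x)‖ := by
            rw [← mul_apply_eq_comp, mul_assoc _ (P (S i)), (hP.isIdem _).eq]
      _ ≤ C * ‖P (S i) x‖ :=
            (ContinuousLinearMap.le_opNorm _ _).trans (by gcongr; exact hT i hi)

theorem gridIoc_eq_zero (hP : IsSpectralMeasure A P) (hA : 0 ≤ A) (hA' : A ≤ 1) {m : ℕ}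
    (hm : 0 < m) {k : ℤ} (hk : k ∉ Icc (-1 : ℤ) m) : P (gridIoc m k) = 0 := by
  have hm' : (0 : ℝ) < m := Nat.cast_pos.mpr hm
  rw [mem_Icc, not_and_or, not_le, not_le] at hk
  rcases hk with hk | hk
  · refine hP.Ioc_eq_zero_of_lt_zero hA (div_neg_of_neg_of_pos ?_ hm')
    have : (k : ℝ) ≤ -2 := by exact_mod_cast (by omega : k ≤ -2)
    linarith
  · exact hP.Ioc_eq_zero_of_one_lt hA' ((one_lt_div hm').mpr (by exact_mod_cast hk))

theorem sum_gridIoc_eq_one (hP : IsSpectralMeasure A P) (hA : 0 ≤ A) (hA' : A ≤ 1) {m : ℕ}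
    (hm : 0 < m) : ∑ k ∈ Icc (-1 : ℤ) m, P (gridIoc m k) = 1 := by
  ext x
  have h := hP.hasSum_of_denumerable (gridIoc m) (pairwise_disjoint_gridIoc m) x
  rw [iUnion_gridIoc hm, hP.univ] at h
  rw [_root_.sum_apply]
  exact (hasSum_sum_of_ne_finset_zero fun k hk => by
    rw [hP.gridIoc_eq_zero hA hA' hm hk, zero_apply]).unique h

theorem norm_gridIoc_commutator_le (hP : IsSpectralMeasure A P) (B : H →L[ℂ] H) {m : ℕ}
    (hm : 0 < m) {k j : ℤ} (hkj : |k - j| ≤ 1) :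
    ‖P (gridIoc m k) * (B * A - A * B) * P (gridIoc m j)‖ ≤ ‖B‖ * (3 / m) := by
  have hm' : (0 : ℝ) < m := Nat.cast_pos.mpr hm
  have hlen : ∀ i : ℤ, (i : ℝ) / m ≤ ((i : ℝ) + 1) / m := fun i => by gcongr; linarith
  refine (hP.norm_compression_commutator_le B (hlen k) (hlen j)).trans
    (mul_le_mul_of_nonneg_left ?_ (norm_nonneg B))
  have hkj' : |(j : ℝ) - k| ≤ 1 := by
    rw [abs_sub_comm]; exact_mod_cast hkj
  calc ((k : ℝ) + 1) / m - k / m + (((j : ℝ) + 1) / m - j / m) + |(j : ℝ) / m - k / m|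
      = (2 + |(j : ℝ) - k|) / m := by
        rw [div_sub_div_same, div_sub_div_same, div_sub_div_same, abs_div, abs_of_pos hm']
        ring
    _ ≤ 3 / m := by gcongr; linarith

theorem norm_commutator_le_of_far_compression_eq_zero (hP : IsSpectralMeasure A P) (hA : 0 ≤ A)
    (hA' : A ≤ 1) (B : H →L[ℂ] H) {m : ℕ} (hm : 0 < m)
    (hfar : ∀ k j : ℤ, 2 ≤ |k - j| → P (gridIoc m k) * B * P (gridIoc m j) = 0) :
    ‖B * A - A * B‖ ≤ 9 * ‖B‖ / m := by
  set D := B * A - A * B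
  set I := Icc (-1 : ℤ) m
  set p := fun k => P (gridIoc m k)
  have hdecomp : D = ∑ d ∈ Icc (-1 : ℤ) 1, ∑ j ∈ I, p (j + d) * D * p j :=
    eq_sum_near_diagonals_of_far_eq_zero p I (hP.sum_gridIoc_eq_one hA hA' hm)
      (fun k hk => hP.gridIoc_eq_zero hA hA' hm hk) D
      (fun k j hkj => hP.compression_commutator_eq_zero (hfar k j hkj))
  have hdiag (x : H) (d : ℤ) (hd : d ∈ Icc (-1 : ℤ) 1) :
      ‖∑ j ∈ I, (p (j + d) * D * p j) x‖ ≤ ‖B‖ * (3 / m) * ‖x‖ := by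
    have hx : ∑ j ∈ I, p j x = x := by
      rw [← _root_.sum_apply, hP.sum_gridIoc_eq_one hA hA' hm, one_apply_eq_self]
    refine (hP.norm_sum_compression_shift_apply_le (pairwise_disjoint_gridIoc m)
      (add_left_injective d) D (C := ‖B‖ * (3 / m)) (by positivity) I (fun j _ => ?_)
      x).trans_eq (by rw [hx])
    refine hP.norm_gridIoc_commutator_le B hm ?_
    rw [mem_Icc] at hd
    rw [add_sub_cancel_left, abs_le]
    omega
  refine ContinuousLinearMap.opNorm_le_bound _ (by positivity) fun x => ?_
  calc ‖D x‖ = ‖(∑ d ∈ Icc (-1 : ℤ) 1, ∑ j ∈ I, p (j + d) * D * p j) x‖ := by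
        rw [← hdecomp]
    _ = ‖∑ d ∈ Icc (-1 : ℤ) 1, ∑ j ∈ I, (p (j + d) * D * p j) x‖ := by
        simp only [_root_.sum_apply]
    _ ≤ ∑ d ∈ Icc (-1 : ℤ) 1, ‖B‖ * (3 / m) * ‖x‖ :=
        (norm_sum_le _ _).trans (sum_le_sum (hdiag x))
    _ = 9 * ‖B‖ / m * ‖x‖ := by
        rw [sum_const, show (Icc (-1 : ℤ) 1).card = 3 from rfl, nsmul_eq_mul]
        push_cast
        ring

end IsSpectralMeasure

/-- Lemma 2.3: if `B` does not commute with the effect `A`, then there are `m, k, j`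
with `|k - j| ≥ 2` such that `P^A((k/m,(k+1)/m]) B P^A((j/m,(j+1)/m]) ≠ 0`. -/
theorem exists_far_spectral_compression_ne_zero {H : Type*} [NormedAddCommGroup H]
    [InnerProductSpace ℂ H] [CompleteSpace H]
    (A : H →L[ℂ] H) (hA : 0 ≤ A) (hA' : A ≤ 1)
    (P : Set ℝ → H →L[ℂ] H) (hP : IsSpectralMeasure A P)
    (B : H →L[ℂ] H) (hB : B * A ≠ A * B) :
    ∃ (m : ℕ), 0 < m ∧ ∃ k j : ℤ, 2 ≤ |k - j| ∧
      P (Set.Ioc ((k : ℝ) / m) (((k : ℝ) + 1) / m)) * B *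
        P (Set.Ioc ((j : ℝ) / m) (((j : ℝ) + 1) / m)) ≠ 0 := by
  by_contra! hfar
  refine hB (sub_eq_zero.mp (eq_zero_of_forall_norm_le_div _ (9 * ‖B‖) fun m hm => ?_))
  exact hP.norm_commutator_le_of_far_compression_eq_zero hA hA' B hm (hfar m hm)
end

section
/- Let A = {E_i}_{i=1}^n (1 ≤ n ≤ ∞) be a family of pairwise commuting effects on a complex Hilbert space H with ∑_{i=1}^n E_i² = I in the strong operator topology. Then the fixed point set of the Lüders operation equals the commutant: {B ∈ B(H) : ∑_i E_i B E_i = B} = {B ∈ B(H) : B E_i = E_i B for all i}. -/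
/-!
On quadratic forms the Lüders operation acts by `(Φ q)(w) = ∑ᵢ q (Eᵢ w)`: if `q w = ⟪w, X w⟫`
then `(Φ q)(w) = ⟪w, Φ_A(X) w⟫`. Expanding `‖Eᵢ C w - C Eᵢ w‖²` and summing shows that every
fixed point `C` satisfies `∑ᵢ ‖C Eᵢ w‖² = ‖C w‖² + ∑ᵢ ‖Eᵢ C w - C Eᵢ w‖²`. Hence, writing
`q_X w = ‖X w‖²`, a fixed point `B` satisfies `q_B + q_C ≤ Φ q_B` for `C = E_j B - B E_j`, and `C`,
which is again a fixed point because the `Eᵢ` commute, satisfies `q_C ≤ Φ q_C`. Iterating,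
`q_B + n q_C ≤ Φⁿ q_B ≤ ‖B‖² ‖·‖²` for every `n`, so `C = 0`.
-/

open scoped InnerProductSpace ENNReal

theorem enorm_sq_eq_ofReal {F : Type*} [SeminormedAddGroup F] (x : F) :
    ‖x‖ₑ ^ 2 = ENNReal.ofReal (‖x‖ ^ 2) := by
  rw [ENNReal.ofReal_pow (norm_nonneg x), ofReal_norm]

section Iterate

variable {M F : Type*} [AddCommMonoid M] [PartialOrder M] [IsOrderedAddMonoid M]
  [FunLike F M M] [AddMonoidHomClass F M M] {T : F} {q r : M}

theorem add_nsmul_le_iterate (hT : Monotone T) (hq : q + r ≤ T q) (hr : r ≤ T r) (n : ℕ) :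
    q + n • r ≤ T^[n] q := by
  induction n with
  | zero => simp
  | succ n ih =>
    rw [Function.iterate_succ_apply']
    calc q + (n + 1) • r = (q + r) + n • r := by rw [succ_nsmul', add_assoc]
      _ ≤ T q + n • T r := add_le_add hq (nsmul_le_nsmul_right hr n)
      _ = T (q + n • r) := by rw [map_add, map_nsmul]
      _ ≤ T (T^[n] q) := hT ih

end Iterate

noncomputable def ludersForm {ι α : Type*} (E : ι → α → α) :
    (α → ℝ≥0∞) →ₗ[ℝ≥0∞] (α → ℝ≥0∞) where
  toFun q w := ∑' i, q (E i w)
  map_add' _ _ := funext fun _ => ENNReal.tsum_add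
  map_smul' _ _ := funext fun _ => ENNReal.tsum_mul_left

theorem ludersForm_apply {ι α : Type*} (E : ι → α → α) (q : α → ℝ≥0∞) (w : α) :
    ludersForm E q w = ∑' i, q (E i w) := rfl

theorem ludersForm_mono {ι α : Type*} (E : ι → α → α) : Monotone (ludersForm E) :=
  fun _ _ h w => ENNReal.tsum_le_tsum fun i => h (E i w)

section Hilbert

variable {H ι : Type*} [NormedAddCommGroup H] [InnerProductSpace ℂ H] {E : ι → H →L[ℂ] H}

def IsLudersFixed (E : ι → H →L[ℂ] H) (B : H →L[ℂ] H) : Prop :=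
  ∀ x, HasSum (fun i => E i (B (E i x))) (B x)

theorem isLudersFixed_of_commute (hsum : ∀ x, HasSum (fun i => E i (E i x)) x)
    {B : H →L[ℂ] H} (hB : ∀ i, Commute B (E i)) : IsLudersFixed E B := by
  intro x
  convert B.hasSum (hsum x) using 2 with i
  exact congr($((hB i).symm) (E i x))

theorem IsLudersFixed.commutator {B : H →L[ℂ] H} (hB : IsLudersFixed E B) {A : H →L[ℂ] H}
    (hA : ∀ i, Commute A (E i)) : IsLudersFixed E (A * B - B * A) := by
  have hAE (i : ι) (y : H) : A (E i y) = E i (A y) := congr($((hA i).eq) y)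
  intro x
  convert (A.hasSum (hB x)).sub (hB (A x)) using 2 with i
  · simp only [sub_apply, mul_apply_eq_comp, map_sub, hAE]
  · rfl

variable (hE : ∀ i, (E i : H →ₗ[ℂ] H).IsSymmetric) (hsum : ∀ x, HasSum (fun i => E i (E i x)) x)
include hE hsum

theorem hasSum_norm_sq_apply (v : H) : HasSum (fun i => ‖E i v‖ ^ 2) (‖v‖ ^ 2) := by
  have := RCLike.hasSum_re ℂ ((innerSL ℂ v).hasSum (hsum v))
  simp only [innerSL_apply_apply, inner_self_eq_norm_sq] at this
  convert this using 2 with i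
  rw [← (hE i).apply_clm, inner_self_eq_norm_sq]

theorem summable_norm_sq_apply_apply (X : H →L[ℂ] H) (v : H) :
    Summable fun i => ‖X (E i v)‖ ^ 2 := by
  refine .of_nonneg_of_le (fun i => sq_nonneg _) (fun i => ?_)
    ((hasSum_norm_sq_apply hE hsum v).summable.mul_left (‖X‖ ^ 2))
  rw [← mul_pow]
  exact pow_le_pow_left₀ (norm_nonneg _) (X.le_opNorm _) 2

omit hsum in
theorem norm_sq_apply_sub_norm_sq_commutator (C : H →L[ℂ] H) (i : ι) (v : H) :
    ‖C (E i v)‖ ^ 2 - ‖E i (C v) - C (E i v)‖ ^ 2 =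
      2 * RCLike.re ⟪C v, E i (C (E i v))⟫_ℂ - ‖E i (C v)‖ ^ 2 := by
  rw [norm_sub_sq (𝕜 := ℂ), (hE i).apply_clm]
  ring

theorem IsLudersFixed.hasSum_norm_sq_sub {C : H →L[ℂ] H} (hC : IsLudersFixed E C) (v : H) :
    HasSum (fun i => ‖C (E i v)‖ ^ 2 - ‖E i (C v) - C (E i v)‖ ^ 2) (‖C v‖ ^ 2) := by
  have hinner := RCLike.hasSum_re ℂ ((innerSL ℂ (C v)).hasSum (hC v))
  simp only [innerSL_apply_apply, inner_self_eq_norm_sq] at hinner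
  have h := (hinner.mul_left 2).sub (hasSum_norm_sq_apply hE hsum (C v))
  rw [two_mul, add_sub_cancel_right] at h
  simpa only [norm_sq_apply_sub_norm_sq_commutator hE C _ v] using h

theorem tsum_enorm_sq_apply (v : H) : ∑' i, ‖E i v‖ₑ ^ 2 = ‖v‖ₑ ^ 2 := by
  simp only [enorm_sq_eq_ofReal]
  rw [← ENNReal.ofReal_tsum_of_nonneg (fun i => sq_nonneg _)
    (hasSum_norm_sq_apply hE hsum v).summable, (hasSum_norm_sq_apply hE hsum v).tsum_eq]

theorem IsLudersFixed.tsum_enorm_sq_apply_apply {C : H →L[ℂ] H} (hC : IsLudersFixed E C)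
    (v : H) :
    ∑' i, ‖C (E i v)‖ₑ ^ 2 = ‖C v‖ₑ ^ 2 + ∑' i, ‖E i (C v) - C (E i v)‖ₑ ^ 2 := by
  have hf := summable_norm_sq_apply_apply hE hsum C v
  have hg := hf.hasSum.sub (hC.hasSum_norm_sq_sub hE hsum v)
  simp only [sub_sub_cancel] at hg
  have htsum : ∑' i, ‖C (E i v)‖ ^ 2 = ‖C v‖ ^ 2 + ∑' i, ‖E i (C v) - C (E i v)‖ ^ 2 := by
    rw [hg.tsum_eq, add_sub_cancel]
  simp only [enorm_sq_eq_ofReal]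
  rw [← ENNReal.ofReal_tsum_of_nonneg (fun i => sq_nonneg _) hf,
    ← ENNReal.ofReal_tsum_of_nonneg (fun i => sq_nonneg _) hg.summable, htsum,
    ENNReal.ofReal_add (sq_nonneg _) (tsum_nonneg fun i => sq_nonneg _)]

theorem IsLudersFixed.commutator_eq_zero {B : H →L[ℂ] H} (hB : IsLudersFixed E B) (j : ι)
    (hC : IsLudersFixed E (E j * B - B * E j)) : E j * B - B * E j = 0 := by
  set C := E j * B - B * E j
  set T := ludersForm fun i => ⇑(E i)
  have hT : Monotone T := ludersForm_mono _
  let q (X : H →L[ℂ] H) (w : H) : ℝ≥0∞ := ‖X w‖ₑ ^ 2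
  let N (w : H) : ℝ≥0∞ := ‖B‖ₑ ^ 2 * ‖w‖ₑ ^ 2
  have hqB : q B + q C ≤ T (q B) := fun w => by
    rw [Pi.add_apply, ludersForm_apply, hB.tsum_enorm_sq_apply_apply hE hsum w]
    gcongr
    exact ENNReal.le_tsum j
  have hqC : q C ≤ T (q C) := fun w => by
    rw [ludersForm_apply, hC.tsum_enorm_sq_apply_apply hE hsum w]
    exact le_self_add
  have hqBN : q B ≤ N := fun w => by
    change ‖B w‖ₑ ^ 2 ≤ ‖B‖ₑ ^ 2 * ‖w‖ₑ ^ 2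
    rw [← mul_pow]
    gcongr
    exact B.le_opENorm w
  have hTN : T N ≤ N := fun w => by
    rw [ludersForm_apply, ENNReal.tsum_mul_left, tsum_enorm_sq_apply hE hsum]
  have hbound (n : ℕ) (w : H) : n * q C w ≤ N w :=
    calc n * q C w
      _ ≤ (q B + n • q C) w := by
        simp only [Pi.add_apply, nsmul_eq_mul]
        exact le_add_self
      _ ≤ T^[n] (q B) w := add_nsmul_le_iterate hT hqB hqC n w
      _ ≤ N w := ((hT.iterate n hqBN).trans (hT.antitone_iterate_of_map_le hTN n.zero_le)) w
  ext w
  have hCw : q C w = 0 := by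
    by_contra h
    obtain ⟨n, hn⟩ := ENNReal.exists_nat_mul_gt h (show N w ≠ ⊤ by finiteness)
    exact (hbound n w).not_gt hn
  simpa [q] using hCw

end Hilbert

/-- Theorem 3.1: for a commutative family of effects with `∑ Eᵢ² = I` (strongly), the fixed
point set of the Lüders operation `Φ_A(B) = ∑ Eᵢ B Eᵢ` is exactly the commutant of the `Eᵢ`. -/
theorem fixedPoints_luders_eq_commutant {H : Type*} [NormedAddCommGroup H]
    [InnerProductSpace ℂ H] [CompleteSpace H] {ι : Type*} (E : ι → H →L[ℂ] H)
    (heff : ∀ i, 0 ≤ E i ∧ E i ≤ 1)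
    (hcomm : ∀ i j, E i * E j = E j * E i)
    (hsum : ∀ x : H, HasSum (fun i => E i (E i x)) x) :
    {B : H →L[ℂ] H | ∀ x, HasSum (fun i => E i (B (E i x))) (B x)} =
      {B : H →L[ℂ] H | ∀ i, B * E i = E i * B} := by
  have hE (i : ι) : (E i : H →ₗ[ℂ] H).IsSymmetric :=
    (IsSelfAdjoint.of_nonneg (heff i).1).isSymmetric
  ext B
  refine ⟨fun hB j => ?_, fun hB => isLudersFixed_of_commute hsum hB⟩
  have hC : IsLudersFixed E (E j * B - B * E j) := IsLudersFixed.commutator hB (hcomm j)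
  exact (sub_eq_zero.mp (IsLudersFixed.commutator_eq_zero hE hsum hB j hC)).symm
end
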